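/- The word problem of the group ℤ over the generating alphabet {a, a⁻¹} (the set of words over {a, a⁻¹} whose exponent sum is zero) is not a visibly pushdown language for any partition of the two-letter alphabet. -/

import Mathlib

inductive VKind | call | internal | response
deriving DecidableEq

/-- A (nondeterministic) visibly pushdown automaton over alphabet `A`
partitioned by `kind` into call, internal and response letters. -/
structure VPA (A : Type) (kind : A → VKind) where
  Q : Type
  Γ : Type
  [finQ : Fintype Q]
  [finΓ : Fintype Γ]
  init : Q
  accept : Set Q
  /-- transitions on call letters: push one symbol, do not inspect the stack -/
  δc : Q → A → Set (Q × Γ)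
  /-- transitions on internal letters: do not inspect or modify the stack -/
  δi : Q → A → Set Q
  /-- transitions on response letters: pop the topmost stack symbol -/
  δr : Q → A → Γ → Set Q
  /-- transitions on response letters read on the empty stack (bottom symbol) -/
  δb : Q → A → Set Q

namespace VPA

variable {A : Type} {kind : A → VKind}

inductive Steps (M : VPA A kind) : M.Q × List M.Γ → List A → M.Q × List M.Γ → Prop
  | nil (c) : Steps M c [] c
  | call {q s a q' γ w c} : kind a = .call → (q', γ) ∈ M.δc q a →
      Steps M (q', γ :: s) w c → Steps M (q, s) (a :: w) c
  | internal {q s a q' w c} : kind a = .internal → q' ∈ M.δi q a →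
      Steps M (q', s) w c → Steps M (q, s) (a :: w) c
  | pop {q γ s a q' w c} : kind a = .response → q' ∈ M.δr q a γ →
      Steps M (q', s) w c → Steps M (q, γ :: s) (a :: w) c
  | popEmpty {q a q' w c} : kind a = .response → q' ∈ M.δb q a →
      Steps M (q', []) w c → Steps M (q, []) (a :: w) c

/-- A VPA accepts a word if reading it from the initial state with empty stack
can end in an accepting state (with arbitrary stack contents). -/
def Accepts (M : VPA A kind) (w : List A) : Prop :=
  ∃ c : M.Q × List M.Γ, M.Steps (M.init, []) w c ∧ c.1 ∈ M.accept

end VPA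

/-- `L` is a visibly pushdown language over the partition `kind`. -/
def IsVPL {A : Type} (kind : A → VKind) (L : Set (List A)) : Prop :=
  ∃ M : VPA A kind, L = {w | M.Accepts w}

inductive ZA | a | ainv
deriving DecidableEq


/-!
On a word in which no response letter follows a call letter, a VPA never pops a symbol it has
pushed, so it accepts such a word exactly when the finite automaton obtained by forgetting the
stack does. Whatever the partition, for one ordering `f, s` of the two letters all words
`f ^ N s ^ m` are of this kind, and no finite automaton accepts exactly those with `N = m`.
-/

open List

theorem NFA.mem_evalFrom_singleton_cons {α σ : Type*} {M : NFA α σ} {q q'' : σ} {a : α}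
    {w : List α} : q'' ∈ M.evalFrom {q} (a :: w) ↔ ∃ q' ∈ M.step q a, q'' ∈ M.evalFrom {q'} w := by
  rw [NFA.evalFrom_cons, NFA.stepSet_singleton, NFA.mem_evalFrom_iff_exists]

/-- Pigeonhole on the state sets reached after `f ^ N`: two of them coincide, and then the
automaton cannot tell `f ^ i s ^ i` from `f ^ j s ^ i`. -/
theorem NFA.not_forall_replicate_append_mem_accepts_iff {α σ : Type*} [Finite σ] (M : NFA α σ)
    (f s : α) : ¬ ∀ N m, replicate N f ++ replicate m s ∈ M.accepts ↔ N = m := by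
  intro h
  obtain ⟨i, j, hij, heq⟩ :=
    Finite.exists_ne_map_eq_of_infinite fun N => M.eval (replicate N f)
  have hi := (h i i).2 rfl
  rw [NFA.accepts_eq_acceptsFrom_start, NFA.append_mem_acceptsFrom] at hi
  have hj : replicate j f ++ replicate i s ∈ M.accepts := by
    rw [NFA.accepts_eq_acceptsFrom_start, NFA.append_mem_acceptsFrom]
    exact (congrArg M.acceptsFrom heq) ▸ hi
  exact hij ((h j i).1 hj).symm

namespace VPA

variable {A : Type} {kind : A → VKind} {M : VPA A kind}

/-- The finite automaton obtained by forgetting the stack; response letters are read as if on the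
empty stack. -/
def toNFA (M : VPA A kind) : NFA A M.Q where
  step q x := match kind x with
    | .call => {q' | ∃ γ, (q', γ) ∈ M.δc q x}
    | .internal => M.δi q x
    | .response => M.δb q x
  start := {M.init}
  accept := M.accept

theorem steps_append_iff {c₁ c₃ : M.Q × List M.Γ} {u v : List A} :
    M.Steps c₁ (u ++ v) c₃ ↔ ∃ c₂, M.Steps c₁ u c₂ ∧ M.Steps c₂ v c₃ := by
  constructor
  · induction u generalizing c₁ with
    | nil => exact fun h => ⟨c₁, .nil c₁, h⟩
    | cons x u ih =>
      intro h
      cases h with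
      | call hk hm h =>
        obtain ⟨c₂, h₁, h₂⟩ := ih h
        exact ⟨c₂, .call hk hm h₁, h₂⟩
      | internal hk hm h =>
        obtain ⟨c₂, h₁, h₂⟩ := ih h
        exact ⟨c₂, .internal hk hm h₁, h₂⟩
      | pop hk hm h =>
        obtain ⟨c₂, h₁, h₂⟩ := ih h
        exact ⟨c₂, .pop hk hm h₁, h₂⟩
      | popEmpty hk hm h =>
        obtain ⟨c₂, h₁, h₂⟩ := ih h
        exact ⟨c₂, .popEmpty hk hm h₁, h₂⟩
  · rintro ⟨c₂, h₁, h₂⟩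
    induction h₁ with
    | nil => exact h₂
    | call hk hm _ ih => exact .call hk hm (ih h₂)
    | internal hk hm _ ih => exact .internal hk hm (ih h₂)
    | pop hk hm _ ih => exact .pop hk hm (ih h₂)
    | popEmpty hk hm _ ih => exact .popEmpty hk hm (ih h₂)

/-- Without call letters nothing is ever pushed, so responses always see the empty stack. -/
theorem steps_nil_iff_of_forall_ne_call {q : M.Q} {c : M.Q × List M.Γ} {w : List A}
    (hw : ∀ x ∈ w, kind x ≠ .call) :
    M.Steps (q, []) w c ↔ c.2 = [] ∧ c.1 ∈ M.toNFA.evalFrom {q} w := by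
  induction w generalizing q with
  | nil =>
    constructor
    · rintro ⟨⟩; simp
    · obtain ⟨q', s⟩ := c
      rintro ⟨rfl, h⟩
      rw [NFA.evalFrom_nil, Set.mem_singleton_iff] at h
      exact h ▸ .nil _
  | cons x w ih =>
    have hw' : ∀ y ∈ w, kind y ≠ .call := fun y hy => hw y (mem_cons_of_mem x hy)
    rw [NFA.mem_evalFrom_singleton_cons]
    constructor
    · intro h
      cases h with
      | call hk => exact absurd hk (hw x mem_cons_self)
      | internal hk hm h =>
        obtain ⟨hc, h⟩ := (ih hw').1 h
        exact ⟨hc, _, by simp [toNFA, hk, hm], h⟩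
      | popEmpty hk hm h =>
        obtain ⟨hc, h⟩ := (ih hw').1 h
        exact ⟨hc, _, by simp [toNFA, hk, hm], h⟩
    · rintro ⟨hc, q', hq', h⟩
      have hrun := (ih hw').2 ⟨hc, h⟩
      simp only [toNFA] at hq'
      split at hq'
      · exact absurd ‹_› (hw x mem_cons_self)
      · exact .internal ‹_› hq' hrun
      · exact .popEmpty ‹_› hq' hrun

theorem exists_steps_iff_of_forall_ne_response {q q'' : M.Q} {s : List M.Γ} {w : List A}
    (hw : ∀ x ∈ w, kind x ≠ .response) :
    (∃ t, M.Steps (q, s) w (q'', t)) ↔ q'' ∈ M.toNFA.evalFrom {q} w := by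
  induction w generalizing q s with
  | nil =>
    constructor
    · rintro ⟨t, ⟨⟩⟩; rfl
    · rintro rfl; exact ⟨s, .nil _⟩
  | cons x w ih =>
    have hw' : ∀ y ∈ w, kind y ≠ .response := fun y hy => hw y (mem_cons_of_mem x hy)
    rw [NFA.mem_evalFrom_singleton_cons]
    constructor
    · rintro ⟨t, h⟩
      cases h with
      | call hk hm h => exact ⟨_, by simp only [toNFA, hk]; exact ⟨_, hm⟩, (ih hw').1 ⟨t, h⟩⟩
      | internal hk hm h => exact ⟨_, by simp [toNFA, hk, hm], (ih hw').1 ⟨t, h⟩⟩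
      | pop hk => exact absurd hk (hw x mem_cons_self)
      | popEmpty hk => exact absurd hk (hw x mem_cons_self)
    · rintro ⟨q', hq', h⟩
      simp only [toNFA] at hq'
      split at hq'
      · obtain ⟨γ, hγ⟩ := hq'
        obtain ⟨t, h⟩ := (ih hw' (s := γ :: s)).2 h
        exact ⟨t, .call ‹_› hγ h⟩
      · obtain ⟨t, h⟩ := (ih hw' (s := s)).2 h
        exact ⟨t, .internal ‹_› hq' h⟩
      · exact absurd ‹_› (hw x mem_cons_self)

theorem accepts_append_iff {u v : List A} (hu : ∀ x ∈ u, kind x ≠ .call)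
    (hv : ∀ x ∈ v, kind x ≠ .response) : M.Accepts (u ++ v) ↔ u ++ v ∈ M.toNFA.accepts := by
  rw [NFA.mem_accepts, NFA.evalFrom_append]
  simp only [Accepts, steps_append_iff, steps_nil_iff_of_forall_ne_call hu]
  constructor
  · rintro ⟨⟨q₂, t⟩, ⟨⟨q₁, _⟩, ⟨rfl, hq₁⟩, hsteps⟩, hacc⟩
    exact ⟨q₂, hacc, NFA.mem_evalFrom_iff_exists.2
      ⟨q₁, hq₁, (exists_steps_iff_of_forall_ne_response hv).1 ⟨t, hsteps⟩⟩⟩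
  · rintro ⟨q₂, hacc, h⟩
    obtain ⟨q₁, hq₁, h⟩ := NFA.mem_evalFrom_iff_exists.1 h
    obtain ⟨t, hsteps⟩ := (exists_steps_iff_of_forall_ne_response hv).2 h
    exact ⟨(q₂, t), ⟨(q₁, []), ⟨rfl, hq₁⟩, hsteps⟩, hacc⟩

/-- The word `f ^ N s ^ m` splits into a call-free prefix and a response-free suffix. -/
theorem accepts_replicate_append_iff {f s : A} (hfs : ¬(kind f = .call ∧ kind s = .response))
    (N m : ℕ) : M.Accepts (replicate N f ++ replicate m s) ↔
      replicate N f ++ replicate m s ∈ M.toNFA.accepts := by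
  have hcr : ∀ x, kind x = .call → kind x ≠ .response := fun x h => by simp [h]
  by_cases hf : kind f = .call
  · have hs : kind s ≠ .response := fun hs => hfs ⟨hf, hs⟩
    rw [← nil_append (_ ++ _)]
    refine accepts_append_iff (by simp) fun x hx => ?_
    rcases mem_append.1 hx with hx | hx <;> rw [eq_of_mem_replicate hx]
    exacts [hcr f hf, hs]
  by_cases hs : kind s = .response
  · rw [← append_nil (_ ++ _)]
    refine accepts_append_iff (fun x hx => ?_) (by simp)
    rcases mem_append.1 hx with hx | hx <;> rw [eq_of_mem_replicate hx]
    exacts [hf, fun h => hcr s h hs]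
  · exact accepts_append_iff (fun x hx => eq_of_mem_replicate hx ▸ hf)
      (fun x hx => eq_of_mem_replicate hx ▸ hs)

end VPA

theorem ZA.count_replicate_append_eq_iff {f s : ZA} (hfs : f ≠ s) (N m : ℕ) :
    (replicate N f ++ replicate m s).count .a = (replicate N f ++ replicate m s).count .ainv ↔
      N = m := by
  cases f <;> cases s <;> simp [count_replicate] at hfs ⊢
  exact eq_comm

/-- The word problem of ℤ over the generating alphabet {a, a⁻¹}, i.e. the set
of words with equally many a's as a⁻¹'s, is not a visibly pushdown language
for any partition of the two-letter alphabet. -/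
theorem wordProblem_Z_not_VPL :
    ∀ kind : ZA → VKind,
      ¬ IsVPL kind {w : List ZA | w.count ZA.a = w.count ZA.ainv} := by
  rintro kind ⟨M, hM⟩
  obtain ⟨f, s, hfs, hblind⟩ :
      ∃ f s : ZA, f ≠ s ∧ ¬(kind f = .call ∧ kind s = .response) := by
    by_cases h : kind .a = .call ∧ kind .ainv = .response
    · exact ⟨.ainv, .a, by decide, fun h' => by simp [h.2] at h'⟩
    · exact ⟨.a, .ainv, by decide, h⟩
  have := M.finQ
  refine M.toNFA.not_forall_replicate_append_mem_accepts_iff f s fun N m => ?_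
  rw [← M.accepts_replicate_append_iff hblind, ← ZA.count_replicate_append_eq_iff hfs]
  exact (Set.ext_iff.1 hM _).symm
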